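/- arXiv:1909.01112 — 4 statements merged into one kernel-verified Lean document; each statement's English description precedes it below -/
import Mathlib

section
/- Let δ : [0,∞) → (0,∞) satisfy δ(0) = 1, be log-subadditive (δ(s)·δ(t) ≤ δ(s+t) for all s, t ≥ 0), and have a one-sided derivative d at t = 0 (i.e., (δ(h) − 1)/h → d as h ↓ 0). Then δ(t) ≥ e^{d·t} for every t ≥ 0. -/
open Filter Set Real Topology

/-- A log-subadditive discount function with one-sided derivative `d` at `0`
dominates the exponential `e^(d t)`. -/
theorem stmt_2 (δ : ℝ → ℝ) (d : ℝ)
    (hpos : ∀ t, 0 ≤ t → 0 < δ t)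
    (h0 : δ 0 = 1)
    (hsub : ∀ s t, 0 ≤ s → 0 ≤ t → δ s * δ t ≤ δ (s + t))
    (hd : Filter.Tendsto (fun h => (δ h - 1) / h) (nhdsWithin 0 (Set.Ioi 0)) (nhds d)) :
    ∀ t, 0 ≤ t → Real.exp (d * t) ≤ δ t := by
  have hpow : ∀ (n : ℕ) (s : ℝ), 0 ≤ s → δ s ^ n ≤ δ (n * s) := by
    intro n
    induction n with
    | zero => intro s hs; simp [h0]
    | succ n ih =>
      intro s hs
      calc δ s ^ (n+1) = δ s ^ n * δ s := pow_succ _ _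
        _ ≤ δ (n*s) * δ s :=
            mul_le_mul_of_nonneg_right (ih s hs) (le_of_lt (hpos s hs))
        _ ≤ δ (n*s + s) := hsub _ _ (by positivity) hs
        _ = δ ((n+1 : ℕ)*s) := by push_cast; ring_nf
  intro t ht
  rcases eq_or_lt_of_le ht with rfl | htpos
  · simp [h0]
  -- δ tends to 1 from the right at 0
  have hδ1 : Tendsto δ (𝓝[>] (0:ℝ)) (𝓝 1) := by
    have : Tendsto (fun h : ℝ => 1 + h * ((δ h - 1) / h)) (𝓝[>] (0:ℝ)) (𝓝 (1 + 0 * d)) := by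
      exact tendsto_const_nhds.add
        ((tendsto_nhdsWithin_of_tendsto_nhds tendsto_id).mul hd)
    rw [show (1 : ℝ) + 0 * d = 1 by ring] at this
    refine this.congr' ?_
    filter_upwards [self_mem_nhdsWithin] with h hh
    have : h ≠ 0 := ne_of_gt hh
    field_simp
    ring
  -- auxiliary function G
  set G : ℝ → ℝ := fun x => if x = 1 then 1 else Real.log x / (x - 1) with hGdef
  have hG : Tendsto G (𝓝 (1:ℝ)) (𝓝 1) := by
    have hder : HasDerivAt Real.log 1 1 := by
      simpa using Real.hasDerivAt_log one_ne_zero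
    have hslope : Tendsto (slope Real.log 1) (𝓝[≠] (1:ℝ)) (𝓝 1) :=
      hasDerivAt_iff_tendsto_slope.mp hder
    have h1 : Tendsto G (𝓝[≠] (1:ℝ)) (𝓝 1) := by
      refine hslope.congr' ?_
      filter_upwards [self_mem_nhdsWithin] with x hx
      simp only [hGdef, if_neg (by simpa using hx)]
      rw [slope_def_field]
      simp [Real.log_one, div_eq_div_iff]
    have h2 : Tendsto G (pure (1:ℝ)) (𝓝 1) := by
      have : G 1 = 1 := by simp [hGdef]
      simpa [this] using tendsto_pure_nhds G 1
    nth_rewrite 1 [← nhdsNE_sup_pure (1:ℝ)]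
    exact tendsto_sup.mpr ⟨h1, h2⟩
  -- log δ h / h → d as h → 0+
  have hquot : Tendsto (fun h => Real.log (δ h) / h) (𝓝[>] (0:ℝ)) (𝓝 d) := by
    have : Tendsto (fun h => ((δ h - 1) / h) * G (δ h)) (𝓝[>] (0:ℝ)) (𝓝 (d * 1)) :=
      hd.mul (hG.comp hδ1)
    rw [mul_one] at this
    refine this.congr' ?_
    filter_upwards [self_mem_nhdsWithin] with h hh
    have hh0 : (h : ℝ) ≠ 0 := ne_of_gt hh
    have hδh : 0 < δ h := hpos h (le_of_lt hh)
    by_cases h1 : δ h = 1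
    · simp [hGdef, h1]
    · simp only [hGdef, if_neg h1]
      have : δ h - 1 ≠ 0 := sub_ne_zero.mpr h1
      field_simp
  -- sequence t/n → 0+
  have hn : Tendsto (fun n : ℕ => t / n) atTop (𝓝[>] (0:ℝ)) := by
    rw [tendsto_nhdsWithin_iff]
    constructor
    · exact tendsto_const_div_atTop_nhds_zero_nat t
    · filter_upwards [eventually_ge_atTop 1] with n hn
      exact div_pos htpos (by exact_mod_cast Nat.pos_of_ne_zero (by omega))
  have hseq : Tendsto (fun n : ℕ => (n : ℝ) * Real.log (δ (t / n))) atTop (𝓝 (d * t)) := by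
    have h1 : Tendsto (fun n : ℕ => t * (Real.log (δ (t / n)) / (t / n))) atTop (𝓝 (t * d)) :=
      tendsto_const_nhds.mul (hquot.comp hn)
    rw [show t * d = d * t by ring] at h1
    refine h1.congr' ?_
    filter_upwards [eventually_ge_atTop 1] with n hn1
    have hn0 : (n : ℝ) ≠ 0 := by exact_mod_cast Nat.pos_of_ne_zero (by omega) |>.ne'
    have hteq : t / n ≠ 0 := div_ne_zero (ne_of_gt htpos) hn0
    field_simp
  -- conclude
  have hlog : d * t ≤ Real.log (δ t) := by
    refine le_of_tendsto hseq ?_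
    filter_upwards [eventually_ge_atTop 1] with n hn1
    have hn0 : (0:ℝ) < n := by exact_mod_cast Nat.pos_of_ne_zero (by omega)
    have hs : 0 ≤ t / n := le_of_lt (div_pos htpos hn0)
    have := hpow n (t / n) hs
    rw [mul_div_cancel₀ t (ne_of_gt hn0)] at this
    have hlogle : Real.log (δ (t/n) ^ n) ≤ Real.log (δ t) :=
      Real.log_le_log (pow_pos (hpos _ hs) n) this
    rwa [Real.log_pow] at hlogle
  calc Real.exp (d * t) ≤ Real.exp (Real.log (δ t)) := Real.exp_le_exp.mpr hlog
    _ = δ t := Real.exp_log (hpos t ht)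
end

section
/- Let δ : [0,∞) → (0,∞) be nonincreasing with δ(0) = 1, log-subadditive (δ(s)·δ(t) ≤ δ(s+t) for all s, t ≥ 0), with one-sided derivative d < 0 at t = 0, and non-exponential in the sense that δ(t₁) ≠ e^{d·t₁} for some t₁ > 0. Then for every λ > 0, ∫₀^∞ λ e^{−λt} δ(t) dt > λ/(λ − d). -/
open MeasureTheory Set Filter Real

/-- `∫_{Ioi a} e^{b x} dx = -e^{b a}/b` for `b < 0`. -/
lemma exp_integral_Ioi_aux (a : ℝ) {b : ℝ} (hb : b < 0) :
    ∫ x in Set.Ioi a, Real.exp (b * x) = -Real.exp (b * a) / b := by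
  have hb0 : b ≠ 0 := ne_of_lt hb
  have hderiv : ∀ x ∈ Set.Ici a,
      HasDerivAt (fun x => Real.exp (b * x) / b) (Real.exp (b * x)) x := by
    intro x _
    have h1 : HasDerivAt (fun x : ℝ => b * x) b x := by
      simpa using (hasDerivAt_id x).const_mul b
    have h2 : HasDerivAt (fun x => Real.exp (b * x)) (Real.exp (b * x) * b) x :=
      (Real.hasDerivAt_exp (b * x)).comp x h1
    have h3 := h2.div_const b
    simpa [mul_div_assoc, mul_div_cancel_right₀ _ hb0] using h3
  have hint : IntegrableOn (fun x => Real.exp (b * x)) (Set.Ioi a) := by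
    have := exp_neg_integrableOn_Ioi a (neg_pos.2 hb)
    simpa using this
  have htend : Tendsto (fun x => Real.exp (b * x) / b) atTop (nhds 0) := by
    have h1 : Tendsto (fun x : ℝ => b * x) atTop atBot :=
      tendsto_id.const_mul_atTop_of_neg hb
    have h2 : Tendsto (fun x => Real.exp (b * x)) atTop (nhds 0) :=
      Real.tendsto_exp_atBot.comp h1
    simpa using h2.div_const b
  have := integral_Ioi_of_hasDerivAt_of_tendsto' hderiv hint htend
  rw [this]; ring

/-- The key inequality `E[δ(T)] > λ/(λ - δ'(0))` for an exponential holding time `T`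
with rate `λ`, for a non-exponential log-subadditive discount function. -/
theorem stmt_4 (δ : ℝ → ℝ) (d t₁ : ℝ)
    (hpos : ∀ t, 0 ≤ t → 0 < δ t)
    (hmono : AntitoneOn δ (Set.Ici 0))
    (h0 : δ 0 = 1)
    (hsub : ∀ s t, 0 ≤ s → 0 ≤ t → δ s * δ t ≤ δ (s + t))
    (hd : Filter.Tendsto (fun h => (δ h - 1) / h) (nhdsWithin 0 (Set.Ioi 0)) (nhds d))
    (hdneg : d < 0)
    (ht₁ : 0 < t₁)
    (hne : δ t₁ ≠ Real.exp (d * t₁)) :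
    ∀ l : ℝ, 0 < l →
      l / (l - d) < ∫ t in Set.Ioi (0 : ℝ), l * Real.exp (-l * t) * δ t := by
  -- δ h ≤ 1 for h ≥ 0
  have hle1 : ∀ h : ℝ, 0 ≤ h → δ h ≤ 1 := by
    intro h hh
    have := hmono (self_mem_Ici) hh hh
    simpa [h0] using this
  -- δ h < 1 for h > 0
  have hlt1 : ∀ h : ℝ, 0 < h → δ h < 1 := by
    intro h hh
    rcases lt_or_eq_of_le (hle1 h hh.le) with h1 | h1
    · exact h1
    · exfalso
      -- δ = 1 on (0, h], so the derivative quotient is eventually 0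
      have hev : ∀ᶠ s in nhdsWithin 0 (Set.Ioi 0), (δ s - 1) / s = 0 := by
        filter_upwards [Ioo_mem_nhdsGT_of_mem (Set.left_mem_Ico.2 hh)] with s hs
        have hs1 : δ s ≤ 1 := hle1 s hs.1.le
        have hs2 : (1 : ℝ) ≤ δ s := by
          have := hmono (Set.mem_Ici.2 hs.1.le) (Set.mem_Ici.2 hh.le) hs.2.le
          rw [h1] at this; linarith
        have : δ s = 1 := le_antisymm hs1 hs2
        simp [this]
      have : Tendsto (fun s => (δ s - 1) / s) (nhdsWithin 0 (Set.Ioi 0)) (nhds 0) :=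
        Tendsto.congr' (by filter_upwards [hev] with s hs; exact hs.symm) tendsto_const_nhds
      have := tendsto_nhds_unique hd this
      linarith
  -- δ h → 1 as h → 0+
  have hδ1 : Tendsto δ (nhdsWithin 0 (Set.Ioi 0)) (nhds 1) := by
    have hid : Tendsto (fun h : ℝ => h) (nhdsWithin 0 (Set.Ioi 0)) (nhds 0) :=
      tendsto_id.mono_left nhdsWithin_le_nhds
    have hmul : Tendsto (fun h => (δ h - 1) / h * h) (nhdsWithin 0 (Set.Ioi 0)) (nhds 0) := by
      simpa using hd.mul hid
    have heq : Tendsto (fun h => δ h - 1) (nhdsWithin 0 (Set.Ioi 0)) (nhds 0) := by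
      refine hmul.congr' ?_
      filter_upwards [self_mem_nhdsWithin] with h hh
      have : (h : ℝ) ≠ 0 := ne_of_gt hh
      field_simp
    have := heq.add_const 1
    simpa using this
  -- log δ h / h → d as h → 0+
  have hlog : Tendsto (fun h => Real.log (δ h) / h) (nhdsWithin 0 (Set.Ioi 0)) (nhds d) := by
    have hslope : Tendsto (slope Real.log 1) (nhdsWithin 1 {(1 : ℝ)}ᶜ) (nhds 1) := by
      have h := Real.hasDerivAt_log (one_ne_zero)
      rw [hasDerivAt_iff_tendsto_slope] at h
      simpa using h
    have hδne : Tendsto δ (nhdsWithin 0 (Set.Ioi 0)) (nhdsWithin 1 {(1 : ℝ)}ᶜ) := by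
      rw [tendsto_nhdsWithin_iff]
      refine ⟨hδ1, ?_⟩
      filter_upwards [self_mem_nhdsWithin] with h hh
      exact ne_of_lt (hlt1 h hh)
    have hcomp : Tendsto (fun h => slope Real.log 1 (δ h))
        (nhdsWithin 0 (Set.Ioi 0)) (nhds 1) := hslope.comp hδne
    have hmul := hcomp.mul hd
    rw [one_mul] at hmul
    refine hmul.congr' ?_
    filter_upwards [self_mem_nhdsWithin] with h hh
    have h1 : δ h - 1 ≠ 0 := by have := hlt1 h hh; linarith
    have h2 : (h : ℝ) ≠ 0 := ne_of_gt hh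
    simp only [slope_def_field, Real.log_one, sub_zero]
    field_simp
  -- δ h ^ n ≤ δ (n * h)
  have hpow : ∀ (n : ℕ) (h : ℝ), 0 ≤ h → δ h ^ n ≤ δ (n * h) := by
    intro n
    induction n with
    | zero => intro h hh; simp [h0]
    | succ n ih =>
      intro h hh
      have h1 : δ h ^ n * δ h ≤ δ (n * h) * δ h := by
        have := ih h hh
        have hδh := hpos h hh
        nlinarith [pow_nonneg hδh.le n]
      have h2 : δ (n * h) * δ h ≤ δ (n * h + h) :=
        hsub _ _ (by positivity) hh
      calc δ h ^ (n + 1) = δ h ^ n * δ h := by ring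
        _ ≤ δ (n * h + h) := le_trans h1 h2
        _ = δ ((n + 1 : ℕ) * h) := by push_cast; ring_nf
  -- exp (d t) ≤ δ t for t ≥ 0
  have hlow : ∀ t : ℝ, 0 ≤ t → Real.exp (d * t) ≤ δ t := by
    intro t ht
    rcases eq_or_lt_of_le ht with h | h
    · rw [← h]; simp [h0]
    · -- t > 0
      have htne : t ≠ 0 := ne_of_gt h
      have hseq : Tendsto (fun n : ℕ => t / n) atTop (nhdsWithin 0 (Set.Ioi 0)) := by
        rw [tendsto_nhdsWithin_iff]
        refine ⟨tendsto_const_div_atTop_nhds_zero_nat t, ?_⟩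
        filter_upwards [Filter.eventually_ge_atTop 1] with n hn
        have : (0 : ℝ) < n := by exact_mod_cast hn
        exact Set.mem_Ioi.2 (div_pos h this)
      have ha : Tendsto (fun n : ℕ => t * (Real.log (δ (t / n)) / (t / n)))
          atTop (nhds (t * d)) :=
        (tendsto_const_nhds.mul (hlog.comp hseq))
      have hbound : ∀ᶠ n : ℕ in atTop,
          t * (Real.log (δ (t / n)) / (t / n)) ≤ Real.log (δ t) := by
        filter_upwards [Filter.eventually_ge_atTop 1] with n hn
        have hn0 : (0 : ℝ) < n := by exact_mod_cast hn
        have hq : 0 < t / n := div_pos h hn0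
        have heq : t * (Real.log (δ (t / n)) / (t / n)) = n * Real.log (δ (t / n)) := by
          field_simp
        rw [heq, ← Real.log_pow]
        have h1 : δ (t / n) ^ n ≤ δ ((n : ℝ) * (t / n)) := hpow n _ hq.le
        have h2 : (n : ℝ) * (t / n) = t := by field_simp
        rw [h2] at h1
        exact Real.log_le_log (pow_pos (hpos _ hq.le) n) h1
      have hfinal : t * d ≤ Real.log (δ t) := le_of_tendsto ha hbound
      calc Real.exp (d * t) = Real.exp (t * d) := by ring_nf
        _ ≤ Real.exp (Real.log (δ t)) := Real.exp_le_exp.2 hfinal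
        _ = δ t := Real.exp_log (hpos t ht)
  -- strictness at t₁
  have hstrict : Real.exp (d * t₁) < δ t₁ :=
    lt_of_le_of_ne (hlow t₁ ht₁.le) (Ne.symm hne)
  set c : ℝ := δ t₁ * Real.exp (-(d * t₁)) with hc
  have hc1 : 1 < c := by
    have h1 : Real.exp (d * t₁) * Real.exp (-(d * t₁)) < δ t₁ * Real.exp (-(d * t₁)) :=
      mul_lt_mul_of_pos_right hstrict (Real.exp_pos _)
    rwa [← Real.exp_add, add_neg_cancel, Real.exp_zero] at h1
  -- δ t ≥ c * exp (d t) for t ≥ t₁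
  have hlow2 : ∀ t : ℝ, t₁ ≤ t → c * Real.exp (d * t) ≤ δ t := by
    intro t ht
    have h1 : δ t₁ * δ (t - t₁) ≤ δ t := by
      have := hsub t₁ (t - t₁) ht₁.le (by linarith)
      simpa using this
    have h2 : Real.exp (d * (t - t₁)) ≤ δ (t - t₁) := hlow _ (by linarith)
    have h3 : δ t₁ * Real.exp (d * (t - t₁)) ≤ δ t₁ * δ (t - t₁) :=
      mul_le_mul_of_nonneg_left h2 (hpos t₁ ht₁.le).le
    have h4 : c * Real.exp (d * t) = δ t₁ * Real.exp (d * (t - t₁)) := by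
      rw [hc, mul_assoc, ← Real.exp_add]
      ring_nf
    rw [h4]
    exact le_trans h3 h1
  intro l hl
  have hld : 0 < l - d := by linarith
  have hdl : d - l < 0 := by linarith
  -- integrability of the lower bound function g on any Ioi a
  have hgint : ∀ a : ℝ, IntegrableOn (fun t => l * Real.exp ((d - l) * t)) (Set.Ioi a) := by
    intro a
    have := (exp_neg_integrableOn_Ioi a hld).const_mul l
    simpa [neg_sub, IntegrableOn] using this
  -- integrability of F
  have hδmeas : AEMeasurable δ (volume.restrict (Set.Ioi (0 : ℝ))) :=
    aemeasurable_restrict_of_antitoneOn measurableSet_Ioi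
      (hmono.mono (Set.Ioi_subset_Ici le_rfl))
  have hFmeas : AEStronglyMeasurable (fun t => l * Real.exp (-l * t) * δ t)
      (volume.restrict (Set.Ioi (0 : ℝ))) := by
    exact ((Continuous.aemeasurable (by continuity)).mul hδmeas).aestronglyMeasurable
  have hFint : IntegrableOn (fun t => l * Real.exp (-l * t) * δ t) (Set.Ioi (0 : ℝ)) := by
    refine Integrable.mono' ((exp_neg_integrableOn_Ioi 0 hl).const_mul l) hFmeas ?_
    filter_upwards [ae_restrict_mem measurableSet_Ioi] with t ht
    have ht0 : (0 : ℝ) < t := ht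
    have h1 : 0 < δ t := hpos t ht0.le
    have h2 : δ t ≤ 1 := hle1 t ht0.le
    rw [Real.norm_eq_abs, abs_of_nonneg (by positivity)]
    calc l * Real.exp (-l * t) * δ t ≤ l * Real.exp (-l * t) * 1 := by
          apply mul_le_mul_of_nonneg_left h2 (by positivity)
      _ = l * Real.exp (-l * t) := by ring
  -- pointwise inequality on Ioi 0
  have hpt : ∀ t : ℝ, 0 ≤ t → l * Real.exp ((d - l) * t) ≤ l * Real.exp (-l * t) * δ t := by
    intro t ht
    have h1 : l * Real.exp ((d - l) * t) = l * Real.exp (-l * t) * Real.exp (d * t) := by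
      rw [mul_assoc, ← Real.exp_add]; congr 2; ring
    rw [h1]
    exact mul_le_mul_of_nonneg_left (hlow t ht) (by positivity)
  -- pointwise inequality on Ioi t₁ with factor c
  have hpt2 : ∀ t : ℝ, t₁ ≤ t →
      c * (l * Real.exp ((d - l) * t)) ≤ l * Real.exp (-l * t) * δ t := by
    intro t ht
    have he : Real.exp ((d - l) * t) = Real.exp (-l * t) * Real.exp (d * t) := by
      rw [← Real.exp_add]; congr 1; ring
    have h1 : c * (l * Real.exp ((d - l) * t))
        = l * Real.exp (-l * t) * (c * Real.exp (d * t)) := by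
      rw [he]; ring
    rw [h1]
    exact mul_le_mul_of_nonneg_left (hlow2 t ht) (by positivity)
  -- values of the g-integrals
  have hgval : ∀ a : ℝ, ∫ t in Set.Ioi a, l * Real.exp ((d - l) * t)
      = l * (Real.exp ((d - l) * a) / (l - d)) := by
    intro a
    rw [MeasureTheory.integral_const_mul, exp_integral_Ioi_aux a hdl]
    congr 1
    rw [div_eq_div_iff hdl.ne hld.ne']
    ring
  -- split
  have hsplit : (∫ t in Set.Ioi (0 : ℝ), l * Real.exp (-l * t) * δ t)
      = (∫ t in Set.Ioc (0 : ℝ) t₁, l * Real.exp (-l * t) * δ t)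
      + ∫ t in Set.Ioi t₁, l * Real.exp (-l * t) * δ t := by
    rw [← MeasureTheory.setIntegral_union (Set.Ioc_disjoint_Ioi le_rfl) measurableSet_Ioi
      (hFint.mono_set (by intro x hx; exact hx.1)) (hFint.mono_set (Set.Ioi_subset_Ioi ht₁.le)),
      Set.Ioc_union_Ioi_eq_Ioi ht₁.le]
  have hgsplit : (∫ t in Set.Ioi (0 : ℝ), l * Real.exp ((d - l) * t))
      = (∫ t in Set.Ioc (0 : ℝ) t₁, l * Real.exp ((d - l) * t))
      + ∫ t in Set.Ioi t₁, l * Real.exp ((d - l) * t) := by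
    rw [← MeasureTheory.setIntegral_union (Set.Ioc_disjoint_Ioi le_rfl) measurableSet_Ioi
      ((hgint 0).mono_set (by intro x hx; exact hx.1)) (hgint t₁),
      Set.Ioc_union_Ioi_eq_Ioi ht₁.le]
  -- the comparisons
  have hI1 : (∫ t in Set.Ioc (0 : ℝ) t₁, l * Real.exp ((d - l) * t))
      ≤ ∫ t in Set.Ioc (0 : ℝ) t₁, l * Real.exp (-l * t) * δ t := by
    refine MeasureTheory.setIntegral_mono_on
      ((hgint 0).mono_set (by intro x hx; exact hx.1))
      (hFint.mono_set (by intro x hx; exact hx.1)) measurableSet_Ioc ?_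
    intro x hx
    exact hpt x hx.1.le
  have hI2 : (∫ t in Set.Ioi t₁, c * (l * Real.exp ((d - l) * t)))
      ≤ ∫ t in Set.Ioi t₁, l * Real.exp (-l * t) * δ t := by
    refine MeasureTheory.setIntegral_mono_on ((hgint t₁).const_mul c)
      (hFint.mono_set (Set.Ioi_subset_Ioi ht₁.le)) measurableSet_Ioi ?_
    intro x hx
    exact hpt2 x (le_of_lt hx)
  have hIpos : 0 < ∫ t in Set.Ioi t₁, l * Real.exp ((d - l) * t) := by
    rw [hgval t₁]; positivity
  have hI2' : (∫ t in Set.Ioi t₁, l * Real.exp ((d - l) * t))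
      < ∫ t in Set.Ioi t₁, c * (l * Real.exp ((d - l) * t)) := by
    have heq : (∫ t in Set.Ioi t₁, c * (l * Real.exp ((d - l) * t)))
        = c * ∫ t in Set.Ioi t₁, l * Real.exp ((d - l) * t) :=
      MeasureTheory.integral_const_mul c _
    rw [heq]
    exact lt_mul_of_one_lt_left hIpos hc1
  have hval0 : (∫ t in Set.Ioi (0 : ℝ), l * Real.exp ((d - l) * t)) = l / (l - d) := by
    rw [hgval 0]
    norm_num [mul_one_div, div_eq_mul_inv]
  calc l / (l - d) = (∫ t in Set.Ioc (0 : ℝ) t₁, l * Real.exp ((d - l) * t))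
        + ∫ t in Set.Ioi t₁, l * Real.exp ((d - l) * t) := by rw [← hgsplit, hval0]
    _ < (∫ t in Set.Ioc (0 : ℝ) t₁, l * Real.exp ((d - l) * t))
        + ∫ t in Set.Ioi t₁, c * (l * Real.exp ((d - l) * t)) := by linarith
    _ ≤ (∫ t in Set.Ioc (0 : ℝ) t₁, l * Real.exp (-l * t) * δ t)
        + ∫ t in Set.Ioi t₁, l * Real.exp (-l * t) * δ t := add_le_add hI1 hI2
    _ = ∫ t in Set.Ioi (0 : ℝ), l * Real.exp (-l * t) * δ t := hsplit.symm
end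

section
/- Let u > 1, K > 0 and α ∈ (0,1) be real numbers. Then there exists n₀ ∈ ℤ such that K − u^{n₀} > α·(K − u^{n₀−1}) and K − u^{n₀+1} ≤ α·(K − u^{n₀}) (integer powers uⁿ denote real zpow). In particular, for such n₀ one has 0 < K − u^{n₀} and u^{n₀−1} < K, i.e., n₀ ≤ ⌊log_u K⌋. -/
/-!
Writing `x = u ^ (n₀ - 1)`, both inequalities are linear in `x`: the first says
`x < c` and the second `c ≤ u * x`, where `c = (1 - α) K / (u - α)`. So `n₀ - 1` is the
exponent with `u ^ (n₀ - 1) < c ≤ u ^ n₀`, which exists because `c > 0` and `u > 1`.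
Since `c < K`, the first inequality forces `K - u ^ n₀ > α (K - x) > 0`.
-/

section ThresholdAlgebra

variable {𝕜 : Type*} [Field 𝕜] [LinearOrder 𝕜] [IsStrictOrderedRing 𝕜] {u K α x : 𝕜}

lemma mul_sub_lt_sub_mul_iff_lt_div (h : α < u) :
    α * (K - x) < K - u * x ↔ x < (1 - α) * K / (u - α) := by
  rw [lt_div_iff₀ (sub_pos.2 h)]
  constructor <;> intro <;> linarith

lemma sub_mul_le_mul_sub_iff_div_le (h : α < u) :
    K - u * x ≤ α * (K - x) ↔ (1 - α) * K / (u - α) ≤ x := by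
  rw [div_le_iff₀ (sub_pos.2 h)]
  constructor <;> intro <;> linarith

lemma one_sub_mul_div_sub_lt_self (hK : 0 < K) (hu : 1 < u) (hα : α < 1) :
    (1 - α) * K / (u - α) < K := by
  rw [div_lt_iff₀ (by linarith)]
  nlinarith

end ThresholdAlgebra

/-- Existence of the threshold level `n₀` characterized by the sandwich
`(K - u^(n₀))/(K - u^(n₀-1)) > α ≥ (K - u^(n₀+1))/(K - u^(n₀))`. -/
theorem stmt_9 (u K α : ℝ) (hu : 1 < u) (hK : 0 < K) (hα0 : 0 < α) (hα1 : α < 1) :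
    ∃ n₀ : ℤ, α * (K - u ^ (n₀ - 1)) < K - u ^ n₀ ∧
      K - u ^ (n₀ + 1) ≤ α * (K - u ^ n₀) ∧
      0 < K - u ^ n₀ ∧ u ^ (n₀ - 1) < K := by
  have hαu : α < u := hα1.trans hu
  have hc : 0 < (1 - α) * K / (u - α) := div_pos (mul_pos (sub_pos.2 hα1) hK) (sub_pos.2 hαu)
  obtain ⟨n, hnc, hcn⟩ := exists_mem_Ioc_zpow hc hu
  have hpow_succ : ∀ m : ℤ, u ^ (m + 1) = u * u ^ m := fun m ↦ by
    rw [zpow_add_one₀ (by positivity), mul_comm]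
  have hnK : u ^ n < K := hnc.trans (one_sub_mul_div_sub_lt_self hK hu hα1)
  have hlower : α * (K - u ^ n) < K - u ^ (n + 1) := by
    rw [hpow_succ]
    exact (mul_sub_lt_sub_mul_iff_lt_div hαu).2 hnc
  have hupper : K - u ^ (n + 1 + 1) ≤ α * (K - u ^ (n + 1)) := by
    rw [hpow_succ (n + 1)]
    exact (sub_mul_le_mul_sub_iff_div_le hαu).2 hcn
  refine ⟨n + 1, ?_, hupper, ?_, ?_⟩
  · rwa [add_sub_cancel_right]
  · exact (mul_nonneg hα0.le (sub_nonneg.2 hnK.le)).trans_lt hlower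
  · rwa [add_sub_cancel_right]
end

section
/- Let δ : [0,∞) → (0,∞) be nonincreasing with δ(0) = 1 and log-subadditive (δ(s)·δ(t) ≤ δ(s+t) for all s, t ≥ 0), with one-sided derivative d at t = 0. Then δ is positive and bounded below by a positive exponential on every bounded interval, and for every λ > 0 the integral ∫₀^∞ λ e^{−λt} δ(t) dt satisfies λ/(λ − d) ≤ ∫₀^∞ λ e^{−λt} δ(t) dt ≤ 1, where d ≤ 0. -/
/-!
Log-subadditivity gives `δ (t / n) ^ n ≤ δ t`, and since `n (δ (t / n) - 1) → d t`,
the left side tends to `e^(d t)`. Integrating `e^(d t) ≤ δ t ≤ 1` against the exponential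
density `λ e^(-λ t)` then yields both bounds.
-/

open MeasureTheory Set Filter Topology Real

section SuperMultiplicative

variable {δ : ℝ → ℝ}

lemma pow_le_apply_natCast_mul (h0 : 1 ≤ δ 0) (hnonneg : ∀ t, 0 ≤ t → 0 ≤ δ t)
    (hsub : ∀ s t, 0 ≤ s → 0 ≤ t → δ s * δ t ≤ δ (s + t)) {x : ℝ} (hx : 0 ≤ x) (n : ℕ) :
    δ x ^ n ≤ δ (n * x) := by
  induction n with
  | zero => simpa using h0
  | succ n ih =>
    calc δ x ^ (n + 1) = δ x ^ n * δ x := pow_succ _ _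
      _ ≤ δ (n * x) * δ x := mul_le_mul_of_nonneg_right ih (hnonneg x hx)
      _ ≤ δ (n * x + x) := hsub _ _ (by positivity) hx
      _ = δ ((n + 1 : ℕ) * x) := by push_cast; ring_nf

lemma exp_mul_le_of_superMultiplicative (h0 : 1 ≤ δ 0) (hnonneg : ∀ t, 0 ≤ t → 0 ≤ δ t)
    (hsub : ∀ s t, 0 ≤ s → 0 ≤ t → δ s * δ t ≤ δ (s + t)) {d : ℝ}
    (hd : Tendsto (fun h => (δ h - 1) / h) (𝓝[>] 0) (𝓝 d)) {t : ℝ} (ht : 0 ≤ t) :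
    exp (d * t) ≤ δ t := by
  rcases ht.eq_or_lt with rfl | ht
  · simpa using h0
  have htn : Tendsto (fun n : ℕ => t / n) atTop (𝓝[>] 0) :=
    tendsto_nhdsWithin_iff.2 ⟨tendsto_const_div_atTop_nhds_zero_nat t,
      (eventually_ne_atTop 0).mono fun n hn =>
        div_pos ht (Nat.cast_pos.2 (Nat.pos_of_ne_zero hn))⟩
  have hlim : Tendsto (fun n : ℕ => (1 + (δ (t / n) - 1)) ^ n) atTop (𝓝 (exp (d * t))) := by
    refine tendsto_one_add_pow_exp_of_tendsto (((hd.comp htn).mul_const t).congr' ?_)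
    filter_upwards [eventually_ne_atTop 0] with n hn
    simp only [Function.comp_apply]
    field_simp
  refine le_of_tendsto hlim ?_
  filter_upwards [eventually_ne_atTop 0] with n hn
  simpa [mul_div_cancel₀ t (Nat.cast_ne_zero.2 hn)] using
    pow_le_apply_natCast_mul h0 hnonneg hsub (x := t / n) (by positivity) n

end SuperMultiplicative

lemma integral_const_mul_exp_neg_mul_Ioi_zero (c : ℝ) {a : ℝ} (ha : 0 < a) :
    ∫ t in Ioi (0 : ℝ), c * exp (-a * t) = c / a := by
  rw [integral_const_mul, integral_exp_mul_Ioi (neg_lt_zero.2 ha)]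
  field_simp
  simp

section ExponentialWeight

variable {g : ℝ → ℝ} {l : ℝ}

lemma integrableOn_mul_exp_neg_mul_mul (hl : 0 < l)
    (hg : AEStronglyMeasurable g (volume.restrict (Ioi 0)))
    (hnonneg : ∀ t, 0 < t → 0 ≤ g t) (hle : ∀ t, 0 < t → g t ≤ 1) :
    IntegrableOn (fun t => l * exp (-l * t) * g t) (Ioi 0) := by
  have hweight : IntegrableOn (fun t => l * exp (-l * t)) (Ioi 0) :=
    (exp_neg_integrableOn_Ioi 0 hl).const_mul l
  refine hweight.mono' (hweight.aestronglyMeasurable.mul hg) ?_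
  filter_upwards [ae_restrict_mem measurableSet_Ioi] with t (ht : 0 < t)
  rw [norm_of_nonneg (mul_nonneg (by positivity) (hnonneg t ht))]
  exact mul_le_of_le_one_right (by positivity) (hle t ht)

lemma setIntegral_mul_exp_neg_mul_mul_le_one (hl : 0 < l)
    (hg : AEStronglyMeasurable g (volume.restrict (Ioi 0)))
    (hnonneg : ∀ t, 0 < t → 0 ≤ g t) (hle : ∀ t, 0 < t → g t ≤ 1) :
    ∫ t in Ioi (0 : ℝ), l * exp (-l * t) * g t ≤ 1 :=
  calc _ ≤ ∫ t in Ioi (0 : ℝ), l * exp (-l * t) :=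
        setIntegral_mono_on (integrableOn_mul_exp_neg_mul_mul hl hg hnonneg hle)
          ((exp_neg_integrableOn_Ioi 0 hl).const_mul l) measurableSet_Ioi
          fun t ht => mul_le_of_le_one_right (by positivity) (hle t ht)
    _ = 1 := by rw [integral_const_mul_exp_neg_mul_Ioi_zero l hl, div_self hl.ne']

lemma div_sub_le_setIntegral_mul_exp_neg_mul_mul {d : ℝ} (hl : 0 < l) (hdl : d < l)
    (hg : AEStronglyMeasurable g (volume.restrict (Ioi 0)))
    (hexp : ∀ t, 0 < t → exp (d * t) ≤ g t) (hle : ∀ t, 0 < t → g t ≤ 1) :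
    l / (l - d) ≤ ∫ t in Ioi (0 : ℝ), l * exp (-l * t) * g t := by
  have hpointwise : ∀ t ∈ Ioi (0 : ℝ), l * exp (-(l - d) * t) ≤ l * exp (-l * t) * g t :=
    fun t ht => calc
      l * exp (-(l - d) * t) = l * exp (-l * t) * exp (d * t) := by
        rw [mul_assoc, ← exp_add]; ring_nf
      _ ≤ l * exp (-l * t) * g t := mul_le_mul_of_nonneg_left (hexp t ht) (by positivity)
  calc l / (l - d) = ∫ t in Ioi (0 : ℝ), l * exp (-(l - d) * t) :=
        (integral_const_mul_exp_neg_mul_Ioi_zero l (sub_pos.2 hdl)).symm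
    _ ≤ _ := setIntegral_mono_on ((exp_neg_integrableOn_Ioi 0 (sub_pos.2 hdl)).const_mul l)
        (integrableOn_mul_exp_neg_mul_mul hl hg (fun t ht => (exp_pos _).le.trans (hexp t ht)) hle)
        measurableSet_Ioi hpointwise

end ExponentialWeight

/-- Non-strict holding-time discount bound: for a nonincreasing, log-subadditive
discount function with one-sided derivative `d` at `0`, one has `d ≤ 0`,
`δ(t) ≥ e^(d t)`, and `λ/(λ-d) ≤ ∫₀^∞ λ e^(-λ t) δ(t) dt ≤ 1` for every `λ > 0`. -/
theorem stmt_15 (δ : ℝ → ℝ) (d : ℝ)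
    (hpos : ∀ t, 0 ≤ t → 0 < δ t)
    (hmono : AntitoneOn δ (Set.Ici 0))
    (h0 : δ 0 = 1)
    (hsub : ∀ s t, 0 ≤ s → 0 ≤ t → δ s * δ t ≤ δ (s + t))
    (hd : Filter.Tendsto (fun h => (δ h - 1) / h) (nhdsWithin 0 (Set.Ioi 0)) (nhds d)) :
    d ≤ 0 ∧ (∀ t, 0 ≤ t → Real.exp (d * t) ≤ δ t) ∧
    ∀ l : ℝ, 0 < l →
      l / (l - d) ≤ (∫ t in Set.Ioi (0 : ℝ), l * Real.exp (-l * t) * δ t) ∧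
      (∫ t in Set.Ioi (0 : ℝ), l * Real.exp (-l * t) * δ t) ≤ 1 := by
  have hle_one : ∀ t, 0 ≤ t → δ t ≤ 1 := fun t ht => h0 ▸ hmono self_mem_Ici ht ht
  have hd_nonpos : d ≤ 0 := by
    refine le_of_tendsto hd ?_
    filter_upwards [self_mem_nhdsWithin] with h (hh : 0 < h)
    exact div_nonpos_of_nonpos_of_nonneg (by linarith [hle_one h hh.le]) hh.le
  have hexp : ∀ t, 0 ≤ t → exp (d * t) ≤ δ t := fun t =>
    exp_mul_le_of_superMultiplicative h0.ge (fun t ht => (hpos t ht).le) hsub hd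
  have hmeas : AEStronglyMeasurable δ (volume.restrict (Ioi 0)) :=
    (aemeasurable_restrict_of_antitoneOn measurableSet_Ioi
      (hmono.mono Ioi_subset_Ici_self)).aestronglyMeasurable
  refine ⟨hd_nonpos, hexp, fun l hl => ⟨?_, ?_⟩⟩
  · exact div_sub_le_setIntegral_mul_exp_neg_mul_mul hl (by linarith) hmeas
      (fun t ht => hexp t ht.le) (fun t ht => hle_one t ht.le)
  · exact setIntegral_mul_exp_neg_mul_mul_le_one hl hmeas
      (fun t ht => (hpos t ht.le).le) (fun t ht => hle_one t ht.le)
end
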